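/- Let A ∈ ℤ^{d×n} be of rank d and b = 𝟏 (the all-ones vector). There exists α ∈ {1, −1} such that Δ_{A,𝟏}(ω) = α · Δ_{A,𝟏}(−ω) for all ω ∈ ℂ^d. Consequently, every monomial appearing in Δ_{A,𝟏} has even total degree if α = 1, and odd total degree if α = −1. -/

import Mathlib

/-! For `β = -i` (indeed whenever `β_ℓ⁻¹ = -β_ℓ`) the inversion `v ↦ v⁻¹` exchanges `v^{a_ℓ}` and
`v^{-a_ℓ}`, so it negates `ψ_{A,β}` and leaves the toric Jacobi matrix unchanged. Hence it maps
the branch locus over `ω` to the branch locus over `-ω`, and the discriminant locus is symmetric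
under `ω ↦ -ω`. By the Nullstellensatz a squarefree `f` cutting it out divides `f(-ω)` and vice
versa, so `f(-ω) = c f(ω)` for a constant `c`; comparing coefficients gives `c = (-1)^|m|` for
every monomial `m` of `f`. -/

noncomputable section


/-- A subset of `ℂⁿ` is Zariski closed if it is the common zero locus
of a set of polynomials. -/
def ZClosed {n : ℕ} (S : Set (Fin n → ℂ)) : Prop :=
  ∃ I : Set (MvPolynomial (Fin n) ℂ),
    S = {x | ∀ p ∈ I, MvPolynomial.eval x p = 0}

/-- Irreducibility with respect to the Zariski topology on `ℂⁿ`. -/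
def ZIrred {n : ℕ} (S : Set (Fin n → ℂ)) : Prop :=
  S.Nonempty ∧ ∀ F G : Set (Fin n → ℂ), ZClosed F → ZClosed G →
    S ⊆ F ∪ G → (S ⊆ F ∨ S ⊆ G)

/-- Dimension of a subset of `ℂⁿ`: Krull dimension of the poset of irreducible
Zariski closed subsets contained in it. -/
def ZDim {n : ℕ} (S : Set (Fin n → ℂ)) : WithBot ℕ∞ :=
  Order.krullDim {T : Set (Fin n → ℂ) // ZClosed T ∧ ZIrred T ∧ T ⊆ S}

/-- Zariski closure in `ℂⁿ`. -/
def ZClosure {n : ℕ} (S : Set (Fin n → ℂ)) : Set (Fin n → ℂ) :=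
  ⋂₀ {F | ZClosed F ∧ S ⊆ F}

/-- A property `P` of points of `ℂ^σ` holds generically if it holds on the
nonvanishing locus of some nonzero polynomial. -/
def GenericProp {σ : Type} (P : (σ → ℂ) → Prop) : Prop :=
  ∃ p : MvPolynomial σ ℂ, p ≠ 0 ∧ ∀ x : σ → ℂ, MvPolynomial.eval x p ≠ 0 → P x

/-- `S ⊆ ℂⁿ` (of dimension `d`) has degree `k`: a generic affine-linear subspace of
codimension `d` meets `S` in exactly `k` points. -/
def HasVarietyDegree {n : ℕ} (S : Set (Fin n → ℂ)) (d k : ℕ) : Prop :=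
  GenericProp (σ := Fin d × Option (Fin n)) fun c =>
    ({x ∈ S | ∀ j : Fin d, c (j, none) + ∑ i : Fin n, c (j, some i) * x i = 0}).ncard = k

/-- The parametrization `ψ_{A,β}` with scaling vector `β`. -/
def psiBeta {d n : ℕ} (A : Matrix (Fin d) (Fin n) ℤ) (β : Fin n → ℂ) (v : Fin d → ℂ) :
    Fin n → ℂ :=
  fun ℓ => (β ℓ * ∏ k, v k ^ (A k ℓ) + (β ℓ)⁻¹ * ∏ k, v k ^ (-(A k ℓ))) / 2

/-- The toric Jacobi matrix `J_{A,b}(v) = ½ A · diag(β_ℓ v^{a_ℓ} - β_ℓ⁻¹ v^{-a_ℓ}) · Aᵀ`. -/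
def toricJac {d n : ℕ} (A : Matrix (Fin d) (Fin n) ℤ) (β : Fin n → ℂ) (v : Fin d → ℂ) :
    Matrix (Fin d) (Fin d) ℂ :=
  fun j k => (1 / 2 : ℂ) * ∑ ℓ, (A j ℓ : ℂ) *
    (β ℓ * ∏ k', v k' ^ (A k' ℓ) - (β ℓ)⁻¹ * ∏ k', v k' ^ (-(A k' ℓ))) * (A k ℓ : ℂ)

/-- The incidence variety `W_{A,b} = {(v,ω) : A ψ_{A,b}(v) = ω}`. -/
def Wset {d n : ℕ} (A : Matrix (Fin d) (Fin n) ℤ) (β : Fin n → ℂ) :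
    Set ((Fin d → ℂ) × (Fin d → ℂ)) :=
  {p | (∀ k, p.1 k ≠ 0) ∧ ∀ i, ∑ ℓ, (A i ℓ : ℂ) * psiBeta A β p.1 ℓ = p.2 i}

/-- The Lissajous discriminant `∇_{A,b}`, the Zariski closure of the branch locus. -/
def discLocus {d n : ℕ} (A : Matrix (Fin d) (Fin n) ℤ) (β : Fin n → ℂ) :
    Set (Fin d → ℂ) :=
  ZClosure {ω | ∃ v : Fin d → ℂ, (v, ω) ∈ Wset A β ∧ (toricJac A β v).det = 0}

/-- The projection `pr_ω : W → ℂ^d` has degree `e`: generic fibers have `e` points. -/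
def HasProjDegree {d : ℕ} (W : Set ((Fin d → ℂ) × (Fin d → ℂ))) (e : ℕ) : Prop :=
  ∃ U : Set (Fin d → ℂ), ZClosed U ∧ U ≠ Set.univ ∧
    ∀ ω ∉ U, ({v | (v, ω) ∈ W}).ncard = e

namespace MvPolynomial

variable {σ R : Type*} [CommRing R]

def negVars : MvPolynomial σ R →ₐ[R] MvPolynomial σ R :=
  bind₁ fun i => -X i

theorem eval_negVars (p : MvPolynomial σ R) (x : σ → R) :
    eval x (negVars p) = eval (-x) p := by
  change aeval x (bind₁ _ p) = aeval (-x) p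
  rw [aeval_bind₁]
  congr 1
  ext i
  simp

theorem negVars_negVars (p : MvPolynomial σ R) : negVars (negVars p) = p := by
  change (negVars.comp negVars) p = AlgHom.id R _ p
  congr 1
  ext i
  simp [negVars]

theorem negVars_monomial [Fintype σ] (m : σ →₀ ℕ) (a : R) :
    negVars (monomial m a) = C ((-1) ^ (∑ i, m i)) * monomial m a := by
  rw [negVars, bind₁_monomial, monomial_eq, Finsupp.prod, ← Finsupp.degree_eq_sum,
    Finsupp.degree_apply]
  simp only [fun i => neg_pow (X i : MvPolynomial σ R), Finset.prod_mul_distrib,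
    Finset.prod_pow_eq_pow_sum, map_pow, map_neg, map_one]
  ring

theorem coeff_negVars [Fintype σ] (p : MvPolynomial σ R) (m : σ →₀ ℕ) :
    coeff m (negVars p) = (-1) ^ (∑ i, m i) * coeff m p := by
  classical
  conv_lhs => rw [p.as_sum, map_sum]
  simp only [negVars_monomial, coeff_sum, coeff_C_mul, coeff_monomial]
  rw [Finset.sum_eq_single m (fun _ _ hm' => by simp [hm'])
    (fun hm => by simp [notMem_support_iff.mp hm])]
  simp

section Nullstellensatz

variable {σ k : Type*} [Field k] [IsAlgClosed k] [Finite σ]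

theorem dvd_of_squarefree_of_eval_eq_zero {f g : MvPolynomial σ k} (hf : Squarefree f)
    (h : ∀ x, eval x f = 0 → eval x g = 0) : f ∣ g := by
  have hg : g ∈ (Ideal.span {f}).radical := by
    rw [← vanishingIdeal_zeroLocus_eq_radical (K := k)]
    exact fun x hx => h x (hx f (Ideal.subset_span rfl))
  obtain ⟨m, hm⟩ := hg
  rw [← hf.dvd_pow_iff_dvd m.succ_ne_zero]
  exact (Ideal.mem_span_singleton.mp hm).mul_right g

theorem exists_negVars_eq_C_mul {f : MvPolynomial σ k} (hf : Squarefree f)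
    (h : ∀ x, eval x f = 0 → eval (-x) f = 0) : ∃ c, negVars f = C c * f := by
  have hdvd : f ∣ negVars f :=
    dvd_of_squarefree_of_eval_eq_zero hf fun x hx => by rw [eval_negVars]; exact h x hx
  have hdvd' : negVars f ∣ f := by simpa only [negVars_negVars] using map_dvd negVars hdvd
  obtain ⟨u, hu⟩ := associated_of_dvd_dvd hdvd hdvd'
  obtain ⟨c, -, hc⟩ := isUnit_iff_eq_C_of_isReduced.mp u.isUnit
  exact ⟨c, by rw [← hu, hc, mul_comm]⟩

end Nullstellensatz

theorem neg_one_pow_eq_of_negVars_eq_C_mul {σ R : Type*} [CommRing R] [IsDomain R] [Fintype σ]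
    {f : MvPolynomial σ R} {c : R} (h : negVars f = C c * f) {m : σ →₀ ℕ}
    (hm : m ∈ f.support) : (-1) ^ (∑ i, m i) = c :=
  mul_right_cancel₀ (mem_support_iff.mp hm) <| by rw [← coeff_negVars, h, coeff_C_mul]

end MvPolynomial

open MvPolynomial

theorem ZClosed.preimage_neg {n : ℕ} {F : Set (Fin n → ℂ)} (hF : ZClosed F) :
    ZClosed (Neg.neg ⁻¹' F) := by
  obtain ⟨I, rfl⟩ := hF
  refine ⟨negVars '' I, Set.ext fun x => ?_⟩
  simp [eval_negVars]

theorem neg_mem_ZClosure {n : ℕ} {S : Set (Fin n → ℂ)} (hS : ∀ x ∈ S, -x ∈ S)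
    {x : Fin n → ℂ} (hx : x ∈ ZClosure S) : -x ∈ ZClosure S := by
  rintro F ⟨hF, hSF⟩
  exact hx (Neg.neg ⁻¹' F) ⟨hF.preimage_neg, fun y hy => hSF (hS y hy)⟩

section Inversion

variable {d n : ℕ} (A : Matrix (Fin d) (Fin n) ℤ) {β : Fin n → ℂ}

theorem psiBeta_inv (hβ : ∀ ℓ, (β ℓ)⁻¹ = -β ℓ) (v : Fin d → ℂ) :
    psiBeta A β v⁻¹ = -psiBeta A β v := by
  funext ℓ
  simp only [psiBeta, Pi.inv_apply, inv_zpow', neg_neg, hβ, Pi.neg_apply]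
  ring

theorem toricJac_inv (hβ : ∀ ℓ, (β ℓ)⁻¹ = -β ℓ) (v : Fin d → ℂ) :
    toricJac A β v⁻¹ = toricJac A β v := by
  funext j k
  simp only [toricJac, Pi.inv_apply, inv_zpow', neg_neg, hβ]
  congr 1
  refine Finset.sum_congr rfl fun ℓ _ => ?_
  ring

theorem neg_mem_discLocus (hβ : ∀ ℓ, (β ℓ)⁻¹ = -β ℓ) {ω : Fin d → ℂ}
    (hω : ω ∈ discLocus A β) : -ω ∈ discLocus A β := by
  refine neg_mem_ZClosure ?_ hω
  rintro ω ⟨v, ⟨hv, hAψ⟩, hdet⟩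
  refine ⟨v⁻¹, ⟨fun k => inv_ne_zero (hv k), fun i => ?_⟩, toricJac_inv A hβ v ▸ hdet⟩
  simp [psiBeta_inv A hβ, hAψ i]

end Inversion

theorem stmt17_general {d n : ℕ} (A : Matrix (Fin d) (Fin n) ℤ)
    (f : MvPolynomial (Fin d) ℂ) (hsf : Squarefree f)
    (hdef : discLocus A (fun _ => -Complex.I) =
      {ω | MvPolynomial.eval ω f = 0}) :
    ∃ α : ℂ, (α = 1 ∨ α = -1) ∧
      (∀ ω : Fin d → ℂ, MvPolynomial.eval ω f = α * MvPolynomial.eval (-ω) f) ∧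
      (α = 1 → ∀ m ∈ f.support, Even (∑ i, m i)) ∧
      (α = -1 → ∀ m ∈ f.support, Odd (∑ i, m i)) := by
  have hsymm : ∀ ω, eval ω f = 0 → eval (-ω) f = 0 := by
    have hI : ∀ _ : Fin n, (-Complex.I)⁻¹ = - -Complex.I := fun _ => by simp
    simpa only [hdef, Set.mem_ofPred_eq] using fun ω => neg_mem_discLocus A hI (ω := ω)
  obtain ⟨c, hc⟩ := exists_negVars_eq_C_mul hsf hsymm
  have hsign := fun m (hm : m ∈ f.support) => neg_one_pow_eq_of_negVars_eq_C_mul hc hm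
  obtain ⟨m, hm⟩ := support_nonempty.mpr hsf.ne_zero
  have hc₁ : c = 1 ∨ c = -1 := hsign m hm ▸ neg_one_pow_eq_or ℂ _
  have hcc : c * c = 1 := by rcases hc₁ with rfl | rfl <;> norm_num
  refine ⟨c, hc₁, fun ω => ?_, fun h m hm => ?_, fun h m hm => ?_⟩
  · rw [← eval_negVars, hc, eval_mul, eval_C, ← mul_assoc, hcc, one_mul]
  · exact (neg_one_pow_eq_one_iff_even (by norm_num)).mp ((hsign m hm).trans h)
  · exact (neg_one_pow_eq_neg_one_iff_odd (by norm_num)).mp ((hsign m hm).trans h)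

/-- Proposition 6.6: the discriminant `Δ_{A,𝟏}` (a squarefree defining polynomial of
`∇_{A,𝟏}`) satisfies `Δ(ω) = α Δ(-ω)` with `α = ±1`; all its monomials have even
total degree if `α = 1` and odd total degree if `α = -1`. -/
theorem stmt17 {d n : ℕ} (A : Matrix (Fin d) (Fin n) ℤ)
    (hrank : (A.map fun z => (z : ℚ)).rank = d)
    (f : MvPolynomial (Fin d) ℂ) (hf0 : f ≠ 0) (hsf : Squarefree f)
    (hdef : discLocus A (fun _ => -Complex.I) =
      {ω | MvPolynomial.eval ω f = 0}) :
    ∃ α : ℂ, (α = 1 ∨ α = -1) ∧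
      (∀ ω : Fin d → ℂ, MvPolynomial.eval ω f = α * MvPolynomial.eval (-ω) f) ∧
      (α = 1 → ∀ m ∈ f.support, Even (∑ i, m i)) ∧
      (α = -1 → ∀ m ∈ f.support, Odd (∑ i, m i)) :=
  stmt17_general A f hsf hdef
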